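/- arXiv:0805.4436 — 2 statements merged into one kernel-verified Lean document; each statement's English description precedes it below -/
import Mathlib

section
/- Let C be a category, S a set of morphisms of C, and loc : C → C[S⁻¹] the localization functor. If Y is an object of C such that the functor X ↦ Hom_C(X, Y) sends every morphism in S to a bijection, then for every object X of C the map Hom_C(X, Y) → Hom_{C[S⁻¹]}(loc X, loc Y) induced by loc is a bijection. -/
/-!
By the Yoneda lemma, `Hom_D(-, L Y)` together with `g ↦ L.map g` is the left Kan extension of
`Hom_C(-, Y)` along `Lᵒᵖ`, i.e. a right derived functor of `Hom_C(-, Y)` with respect to `Wᵒᵖ`.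
When `Y` is `W`-local, `Hom_C(-, Y)` already inverts `Wᵒᵖ`, and the unit of any right derived
functor of a functor that inverts the class is an isomorphism.
-/

open CategoryTheory Opposite

universe w v₁ v₂ u₁ u₂

namespace CategoryTheory

variable {C : Type u₁} [Category.{v₁} C] {D : Type u₂} [Category.{v₂} D]

lemma MorphismProperty.isLocal.isInvertedBy_uliftYoneda_obj {W : MorphismProperty C} {Y : C}
    (hY : W.isLocal Y) : W.op.IsInvertedBy (uliftYoneda.{w}.obj Y) := by
  intro _ _ s hs
  rw [isIso_iff_bijective]
  exact Equiv.ulift.symm.bijective.comp ((hY s.unop hs).comp Equiv.ulift.bijective)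

namespace Localization

variable (L : C ⥤ D) {W : MorphismProperty C} [L.IsLocalization W] {Y : C}

lemma isIso_uliftYonedaMap_of_isLocal (hY : W.isLocal Y) : IsIso (uliftYonedaMap.{0} L Y) := by
  have : (uliftYoneda.{v₁}.obj (L.obj Y)).IsRightDerivedFunctor (uliftYonedaMap.{0} L Y) W.op :=
    ⟨inferInstance⟩
  exact Functor.isIso_of_isRightDerivedFunctor_of_inverts _ _ hY.isInvertedBy_uliftYoneda_obj

lemma map_bijective_of_isLocal (hY : W.isLocal Y) (X : C) :
    Function.Bijective (fun g : X ⟶ Y => L.map g) := by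
  have := isIso_uliftYonedaMap_of_isLocal L hY
  have hX := (isIso_iff_bijective ((uliftYonedaMap.{0} L Y).app (op X))).1 inferInstance
  exact (Equiv.ulift.bijective.comp hX).comp Equiv.ulift.symm.bijective

end Localization

end CategoryTheory

/-- If the functor `Hom(-, Y)` sends every morphism of `S` to a bijection, then for
every `X` the localization functor induces a bijection
`Hom_C(X, Y) ≃ Hom_{C[S⁻¹]}(loc X, loc Y)`. -/
theorem localization_hom_bijective_of_inverts
    {C : Type*} [Category C] (S : MorphismProperty C) (Y : C)
    (hY : ∀ ⦃X X' : C⦄ (s : X ⟶ X'), S s →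
      Function.Bijective (fun g : X' ⟶ Y => s ≫ g)) (X : C) :
    Function.Bijective (fun g : X ⟶ Y => S.Q.map g) :=
  Localization.map_bijective_of_isLocal S.Q hY X
end

section
/- Let C be a category with coproducts, and S a class of morphisms stable under coproducts, such that the localization C[S⁻¹] admits a right calculus of fractions. Then a coproduct of a family of objects in C is also a coproduct of (the images of) the same family in C[S⁻¹]; in particular the localization functor C → C[S⁻¹] preserves coproducts. -/
/-!
With a right calculus of fractions, every morphism `L (∐ X) ⟶ L Y` becomes the image of a
morphism of `C` after precomposition with `L (Sigma.map σ)` for a family `σⱼ ∈ W`: write it as a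
right fraction and pull the denominator back along each inclusion `ιⱼ` by the Ore condition.
As `Sigma.map σ ∈ W`, this builds the descending morphism from componentwise fractions, and it
reduces joint epimorphicity of the `L ιⱼ` to the case of images `L f`, `L g`, where
`L f = L g` is witnessed by some `s ∈ W` with `s ≫ f = s ≫ g`; such witnesses, found
componentwise, assemble into `Sigma.map s ∈ W`.
-/

open CategoryTheory CategoryTheory.Limits

/-- Weaker than `W.IsStableUnderCoproductsOfShape J`, which concerns all colimit cofans and so
agrees with this only when `W` respects isomorphisms. -/
def CategoryTheory.MorphismProperty.IsStableUnderSigmaMap {C : Type*} [Category C]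
    (W : MorphismProperty C) (J : Type*) [HasCoproductsOfShape J C] : Prop :=
  ∀ (X Y : J → C) (f : ∀ j, X j ⟶ Y j), (∀ j, W (f j)) → W (Limits.Sigma.map f)

namespace CategoryTheory.Localization

variable {C D : Type*} [Category C] [Category D] (L : C ⥤ D) (W : MorphismProperty C)
  [L.IsLocalization W] [W.HasRightCalculusOfFractions] {J : Type*} [HasCoproductsOfShape J C]

lemma map_eq_of_map_ι_comp_eq (hW : W.IsStableUnderSigmaMap J) {X : J → C} {Y : C}
    (f g : ∐ X ⟶ Y) (h : ∀ j, L.map (Sigma.ι X j ≫ f) = L.map (Sigma.ι X j ≫ g)) :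
    L.map f = L.map g := by
  choose R r hr hrfg using fun j => (MorphismProperty.map_eq_iff_precomp L W _ _).1 (h j)
  refine (MorphismProperty.map_eq_iff_precomp L W f g).2 ⟨_, Limits.Sigma.map r, hW _ _ _ hr, ?_⟩
  exact Sigma.hom_ext _ _ fun j => by simpa using hrfg j

lemma exists_sigmaMap_comp_eq_map {X : J → C} {Y : C} (a : L.obj (∐ X) ⟶ L.obj Y) :
    ∃ (X' : J → C) (σ : ∀ j, X' j ⟶ X j) (_ : ∀ j, W (σ j)) (f : ∐ X' ⟶ Y),
      L.map (Limits.Sigma.map σ) ≫ a = L.map f := by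
  obtain ⟨φ, rfl⟩ := exists_rightFraction L W a
  choose ψ hψ using fun j => MorphismProperty.LeftFraction.exists_rightFraction
    (MorphismProperty.LeftFraction.mk (Sigma.ι X j) φ.s φ.hs)
  have hσ : Limits.Sigma.map (fun j => (ψ j).s) = Limits.Sigma.desc (fun j => (ψ j).f) ≫ φ.s :=
    Sigma.hom_ext _ _ fun j => by simpa using hψ j
  refine ⟨_, fun j => (ψ j).s, fun j => (ψ j).hs, Limits.Sigma.desc (fun j => (ψ j).f) ≫ φ.f, ?_⟩
  simp [hσ]

lemma exists_sigmaMap_comp_eq_map₂ {X : J → C} {Y : C} (a b : L.obj (∐ X) ⟶ L.obj Y) :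
    ∃ (X' : J → C) (σ : ∀ j, X' j ⟶ X j) (_ : ∀ j, W (σ j)) (f g : ∐ X' ⟶ Y),
      L.map (Limits.Sigma.map σ) ≫ a = L.map f ∧ L.map (Limits.Sigma.map σ) ≫ b = L.map g := by
  obtain ⟨X₁, σ, hσ, f, hf⟩ := exists_sigmaMap_comp_eq_map L W a
  obtain ⟨X₂, τ, hτ, g, hg⟩ := exists_sigmaMap_comp_eq_map L W (L.map (Limits.Sigma.map σ) ≫ b)
  refine ⟨X₂, fun j => τ j ≫ σ j, fun j => W.comp_mem _ _ (hτ j) (hσ j),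
    Limits.Sigma.map τ ≫ f, g, ?_, ?_⟩
  · rw [← Sigma.map_comp_map, L.map_comp, Category.assoc, hf, L.map_comp]
  · rw [← Sigma.map_comp_map, L.map_comp, Category.assoc, hg]

lemma sigma_hom_ext (hW : W.IsStableUnderSigmaMap J) {X : J → C} {T : D}
    (a b : L.obj (∐ X) ⟶ T) (h : ∀ j, L.map (Sigma.ι X j) ≫ a = L.map (Sigma.ι X j) ≫ b) :
    a = b := by
  have := essSurj L W
  let e := L.objObjPreimageIso T
  rw [← cancel_mono e.inv]
  obtain ⟨X', σ, hσ, f, g, hf, hg⟩ := exists_sigmaMap_comp_eq_map₂ L W (a ≫ e.inv) (b ≫ e.inv)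
  have := inverts L W _ (hW _ _ σ hσ)
  rw [← cancel_epi (L.map (Limits.Sigma.map σ)), hf, hg]
  refine map_eq_of_map_ι_comp_eq L W hW f g fun j => ?_
  have hι : L.map (Sigma.ι X' j) ≫ L.map (Limits.Sigma.map σ) =
      L.map (σ j) ≫ L.map (Sigma.ι X j) := by
    rw [← L.map_comp, Sigma.ι_map, L.map_comp]
  rw [L.map_comp, L.map_comp, ← hf, ← hg, reassoc_of% hι, reassoc_of% hι, reassoc_of% (h j)]

lemma exists_map_ι_comp_eq (hW : W.IsStableUnderSigmaMap J) {X : J → C} {T : D}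
    (φ : ∀ j, L.obj (X j) ⟶ T) :
    ∃ d : L.obj (∐ X) ⟶ T, ∀ j, L.map (Sigma.ι X j) ≫ d = φ j := by
  have := essSurj L W
  let e := L.objObjPreimageIso T
  choose ψ hψ using fun j => exists_rightFraction L W (φ j ≫ e.inv)
  let s := Limits.Sigma.map fun j => (ψ j).s
  have := inverts L W s (hW _ _ _ fun j => (ψ j).hs)
  refine ⟨inv (L.map s) ≫ L.map (Limits.Sigma.desc fun j => (ψ j).f) ≫ e.hom, fun j => ?_⟩
  have hι : L.map (ψ j).s ≫ L.map (Sigma.ι X j) = L.map (Sigma.ι _ j) ≫ L.map s := by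
    rw [← L.map_comp, ← L.map_comp, Sigma.ι_map]
  rw [← cancel_epi (L.map (ψ j).s), ← cancel_mono e.inv]
  simp only [Category.assoc, hψ j, MorphismProperty.RightFraction.map_s_comp_map,
    reassoc_of% hι, IsIso.hom_inv_id_assoc, ← L.map_comp_assoc, Sigma.ι_desc,
    Iso.hom_inv_id, Category.comp_id]

noncomputable def isColimitCofanMkMapSigmaι (hW : W.IsStableUnderSigmaMap J) (X : J → C) :
    IsColimit (Cofan.mk (L.obj (∐ X)) fun j => L.map (Sigma.ι X j)) :=
  Cofan.IsColimit.mk _ (fun t => (exists_map_ι_comp_eq L W hW t.inj).choose)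
    (fun t => (exists_map_ι_comp_eq L W hW t.inj).choose_spec)
    (fun t m hm => sigma_hom_ext L W hW _ _ fun j => by
      rw [(exists_map_ι_comp_eq L W hW t.inj).choose_spec]
      exact hm j)

lemma preservesColimitsOfShape_discrete (hW : W.IsStableUnderSigmaMap J) :
    PreservesColimitsOfShape (Discrete J) L :=
  have (X : J → C) : PreservesColimit (Discrete.functor X) L :=
    preservesColimit_of_preserves_colimit_cocone (coproductIsCoproduct X)
      ((isColimitMapCoconeCofanMkEquiv L X _).symm (isColimitCofanMkMapSigmaι L W hW X))
  preservesColimitsOfShape_of_discrete L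

end CategoryTheory.Localization

/-- If `C` has coproducts, `S` is stable under coproducts and admits a right calculus
of fractions, then any coproduct in `C` is still a coproduct in the localization
`C[S⁻¹]`: the localization functor preserves coproducts. -/
theorem localization_preserves_coproducts_of_rightCalculus
    {C : Type*} [Category C] (S : MorphismProperty C)
    [S.HasRightCalculusOfFractions]
    {J : Type*} [HasCoproducts C]
    (hstable : ∀ (X Y : J → C) (f : ∀ j, X j ⟶ Y j),
      (∀ j, S (f j)) → S (Limits.Sigma.map f)) :
    (∀ (X : J → C) (c : Cofan X), IsColimit c →
      Nonempty (IsColimit (S.Q.mapCocone c))) ∧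
    Nonempty (PreservesColimitsOfShape (Discrete J) S.Q) := by
  have := Localization.preservesColimitsOfShape_discrete S.Q S hstable
  exact ⟨fun X c hc => ⟨isColimitOfPreserves S.Q hc⟩, ⟨this⟩⟩
end
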